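/- arXiv:2401.16357 — 4 statements merged into one kernel-verified Lean document; each statement's English description precedes it below -/
import Mathlib

section
/- The forest F_β is acyclic, i.e. it contains no cycle. -/
open Function

/-- The forest `F_β`: two distinct elements `a, b` are adjacent iff both lie in some
bag and one is the image of the other under `β`. -/
def forestF {ι S : Type*} (B : ι → Set S) (β : S → S) : SimpleGraph S :=
  SimpleGraph.fromRel
    (fun a b => (a ∈ ⋃ v, B v) ∧ (b ∈ ⋃ v, B v) ∧ b = β a)

/-!
Every edge of `F_β` has the form `{a, β a}` with `a` in a bag `B v`, and such an `a` is not a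
periodic point of `β`: for `n > 0`, `β^[n] a` lies in the bag `B (next^[n] v)`, disjoint from
`B v`. An edge `{a, f a}` of a graph whose edges all join a vertex to its image under `f` is a
bridge when `a` is not `f`-periodic: the vertices whose forward orbit passes through `a` form a
set containing `a`, closed under all other edges, and it would contain `f a` only if
`f^[n + 1] a = a`.
-/

variable {ι S : Type*}

namespace SimpleGraph

variable {V : Type*} {G : SimpleGraph V}

lemma Reachable.mem_of_forall_adj {s : Set V} (hs : ∀ x y, G.Adj x y → x ∈ s → y ∈ s)
    {u v : V} (huv : G.Reachable u v) (hu : u ∈ s) : v ∈ s := by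
  rw [reachable_iff_reflTransGen] at huv
  induction huv with
  | refl => exact hu
  | tail _ hxy hx => exact hs _ _ hxy hx

lemma isBridge_of_adj_apply {f : V → V} (hG : ∀ x y, G.Adj x y → y = f x ∨ x = f y)
    {a : V} (ha : a ∉ periodicPts f) : G.IsBridge s(a, f a) := by
  rw [isBridge_iff]
  intro hreach
  have hclosed : ∀ x y, (G.deleteEdges {s(a, f a)}).Adj x y →
      x ∈ {x | ∃ n, f^[n] x = a} → y ∈ {x | ∃ n, f^[n] x = a} := by
    rintro x y hxy ⟨n, hn⟩
    rw [deleteEdges_adj, Set.mem_singleton_iff] at hxy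
    rcases hG x y hxy.1 with rfl | rfl
    · cases n with
      | zero => exact absurd (by rw [← hn]; rfl) hxy.2
      | succ n => exact ⟨n, by rwa [← iterate_succ_apply]⟩
    · exact ⟨n + 1, by rwa [iterate_succ_apply]⟩
  obtain ⟨n, hn⟩ := hreach.mem_of_forall_adj hclosed ⟨0, rfl⟩
  exact ha ⟨n + 1, n.succ_pos, by rwa [IsPeriodicPt, IsFixedPt, iterate_succ_apply]⟩

lemma isAcyclic_of_adj_apply {f : V → V} (hG : ∀ x y, G.Adj x y → y = f x ∨ x = f y)
    (hper : ∀ a ∈ G.support, a ∉ periodicPts f) : G.IsAcyclic := by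
  refine isAcyclic_iff_forall_adj_isBridge.mpr fun v w hvw ↦ ?_
  rcases hG v w hvw with rfl | rfl
  · exact isBridge_of_adj_apply hG (hper v ⟨_, hvw⟩)
  · rw [Sym2.eq_swap]
    exact isBridge_of_adj_apply hG (hper w ⟨_, hvw.symm⟩)

end SimpleGraph

lemma iterate_mem_of_mapsTo {next : ι → ι} {B : ι → Set S} {β : S → S}
    (hmap : ∀ v, ∀ s ∈ B v, β s ∈ B (next v)) (n : ℕ) {v : ι} {s : S} (hs : s ∈ B v) :
    β^[n] s ∈ B (next^[n] v) := by
  induction n generalizing v s with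
  | zero => exact hs
  | succ n ih => exact ih (hmap v s hs)

lemma notMem_periodicPts_of_mapsTo {next : ι → ι}
    (hnext : ∀ (v : ι) (j k : ℕ), next^[j] v = next^[k] v → j = k)
    {B : ι → Set S} (hdisj : Pairwise (Disjoint on B)) {β : S → S}
    (hmap : ∀ v, ∀ s ∈ B v, β s ∈ B (next v)) {v : ι} {s : S} (hs : s ∈ B v) :
    s ∉ periodicPts β := by
  rintro ⟨n, hn, hper⟩
  have hbag : next^[n] v = next^[0] v := by
    by_contra hne
    exact Set.disjoint_left.mp (hdisj hne) (hper ▸ iterate_mem_of_mapsTo hmap n hs) hs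
  exact hn.ne' (hnext v n 0 hbag)

section forestF

variable {B : ι → Set S} {β : S → S} {a b : S}

lemma mem_iUnion_of_forestF_adj (h : (forestF B β).Adj a b) : a ∈ ⋃ v, B v := by
  rw [forestF, SimpleGraph.fromRel_adj] at h
  rcases h.2 with ⟨ha, -, -⟩ | ⟨-, ha, -⟩ <;> exact ha

lemma eq_apply_or_eq_apply_of_forestF_adj (h : (forestF B β).Adj a b) : b = β a ∨ a = β b := by
  rw [forestF, SimpleGraph.fromRel_adj] at h
  exact h.2.imp (·.2.2) (·.2.2)

end forestF

theorem forestF_isAcyclic_general (next : ι → ι)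
    (hnext : ∀ (v : ι) (j k : ℕ), next^[j] v = next^[k] v → j = k)
    (B : ι → Set S) (hdisj : Pairwise (Disjoint on B))
    (β : S → S) (hmap : ∀ v, ∀ s ∈ B v, β s ∈ B (next v)) :
    (forestF B β).IsAcyclic := by
  refine SimpleGraph.isAcyclic_of_adj_apply (fun _ _ ↦ eq_apply_or_eq_apply_of_forestF_adj) ?_
  rintro a ⟨b, hab⟩
  obtain ⟨v, hv⟩ := Set.mem_iUnion.mp (mem_iUnion_of_forestF_adj hab)
  exact notMem_periodicPts_of_mapsTo hnext hdisj hmap hv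

/-- The forest `F_β` is acyclic. -/
theorem forestF_isAcyclic (next : ι → ι)
    (hnext : ∀ (v : ι) (j k : ℕ), next^[j] v = next^[k] v → j = k)
    (B : ι → Set S) (hdisj : Pairwise (Disjoint on B))
    (β : S → S) (hmap : ∀ v, ∀ s ∈ B v, β s ∈ B (next v))
    (hinj : ∀ v, Set.InjOn β (B v)) :
    (forestF B β).IsAcyclic :=
  forestF_isAcyclic_general next hnext B hdisj β hmap
end

section
/- If s₁, s₂ ∈ B(v) and s₁ ≠ s₂, then s₁ and s₂ lie in different connected components of F_β (there is no path in F_β joining them). -/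
/-!
A path in `F_β` only ever steps along `β`, so its endpoints have a common iterate
`β^[j] s₁ = β^[k] s₂`. This point lies in both `B (next^[j] v)` and `B (next^[k] v)`, so the
bags coincide, and injectivity of the orbit of `v` forces `j = k`; then `s₁ = s₂` because
`β^[j]` is injective on `B v`.
-/

open Function

variable {ι S : Type*}

theorem SimpleGraph.Reachable.exists_iterate_eq {V : Type*} {G : SimpleGraph V} {f : V → V}
    (hG : ∀ ⦃a b⦄, G.Adj a b → b = f a ∨ a = f b) {a b : V} (h : G.Reachable a b) :
    ∃ j k : ℕ, f^[j] a = f^[k] b := by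
  obtain ⟨p⟩ := h
  induction p with
  | nil => exact ⟨0, 0, rfl⟩
  | cons hadj _ ih =>
    obtain ⟨j, k, hjk⟩ := ih
    rcases hG hadj with rfl | rfl
    · exact ⟨j + 1, k, by rw [iterate_succ_apply, hjk]⟩
    · refine ⟨j, k + 1, ?_⟩
      rw [← iterate_succ_apply, iterate_succ_apply', hjk, iterate_succ_apply']

theorem forestF_adj_imp {B : ι → Set S} {β : S → S} {a b : S} (h : (forestF B β).Adj a b) :
    b = β a ∨ a = β b := by
  rw [forestF, SimpleGraph.fromRel_adj] at h
  exact h.2.imp (·.2.2) (·.2.2)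

section Bags

variable {next : ι → ι} {B : ι → Set S} {β : S → S}

theorem mapsTo_iterate_bag (hmap : ∀ v, ∀ s ∈ B v, β s ∈ B (next v)) (j : ℕ) (v : ι) :
    Set.MapsTo β^[j] (B v) (B (next^[j] v)) := by
  induction j generalizing v with
  | zero => exact Set.mapsTo_id _
  | succ j ih => exact (ih (next v)).comp (hmap v)

theorem injOn_iterate_bag (hmap : ∀ v, ∀ s ∈ B v, β s ∈ B (next v))
    (hinj : ∀ v, Set.InjOn β (B v)) (j : ℕ) (v : ι) : Set.InjOn β^[j] (B v) := by
  induction j generalizing v with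
  | zero => exact Set.injOn_id _
  | succ j ih => exact (ih (next v)).comp (hinj v) (hmap v)

end Bags

/-- Two distinct elements of the same bag lie in different connected components
of `F_β`. -/
theorem forestF_same_bag_not_reachable (next : ι → ι)
    (hnext : ∀ (v : ι) (j k : ℕ), next^[j] v = next^[k] v → j = k)
    (B : ι → Set S) (hdisj : Pairwise (Disjoint on B))
    (β : S → S) (hmap : ∀ v, ∀ s ∈ B v, β s ∈ B (next v))
    (hinj : ∀ v, Set.InjOn β (B v))
    (v : ι) (s₁ s₂ : S) (hs₁ : s₁ ∈ B v) (hs₂ : s₂ ∈ B v) (hne : s₁ ≠ s₂) :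
    ¬ (forestF B β).Reachable s₁ s₂ := by
  intro h
  obtain ⟨j, k, hjk⟩ := h.exists_iterate_eq fun _ _ ↦ forestF_adj_imp
  have h₁ : β^[j] s₁ ∈ B (next^[j] v) := mapsTo_iterate_bag hmap j v hs₁
  have h₂ : β^[j] s₁ ∈ B (next^[k] v) := hjk ▸ mapsTo_iterate_bag hmap k v hs₂
  obtain rfl : j = k := hnext v j k <| by
    by_contra hvne
    exact Set.disjoint_left.mp (hdisj hvne) h₁ h₂
  exact hne (injOn_iterate_bag hmap hinj j v hs₁ hs₂ hjk)
end

section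
/- If the bag sizes are unbounded, i.e. for every N ∈ ℕ there exists v ∈ ι such that B(v) contains at least N elements, then the set of connected components of F_β containing some element of ⋃_v B(v) is infinite. -/
/-!
Every connected component of `F_β` meets each bag in at most one point. Two points `a, b` of
`B v` in the same component have a common image `β^[j] a = β^[k] b`; it lies in both
`B (next^[j] v)` and `B (next^[k] v)`, so disjointness of the bags and injectivity of the orbit
of `v` force `j = k`, and then `a = b` because `β^[j]` is injective on `B v`. Hence a bag with
`N` elements meets `N` distinct components.
-/

open Function

variable {ι S : Type*}

section Bags

variable {next : ι → ι} {B : ι → Set S} {β : S → S}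

theorem forestF_adj_imp_eq_or_eq {a b : S} (h : (forestF B β).Adj a b) :
    b = β a ∨ a = β b := by
  rw [forestF, SimpleGraph.fromRel_adj] at h
  exact h.2.imp (fun h => h.2.2) (fun h => h.2.2)

theorem exists_iterate_eq_of_reachable {a b : S}
    (h : (forestF B β).Reachable a b) : ∃ j k : ℕ, β^[j] a = β^[k] b := by
  rw [SimpleGraph.reachable_iff_reflTransGen] at h
  induction h with
  | refl => exact ⟨0, 0, rfl⟩
  | tail _ hadj ih =>
    obtain ⟨j, k, hjk⟩ := ih
    rcases forestF_adj_imp_eq_or_eq hadj with hc | hc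
    · refine ⟨j + 1, k, ?_⟩
      rw [hc, ← iterate_succ_apply, iterate_succ_apply', iterate_succ_apply', hjk]
    · exact ⟨j, k + 1, by rw [hjk, hc, ← iterate_succ_apply]⟩

theorem connectedComponentMk_injOn_bag
    (hnext : ∀ (v : ι) (j k : ℕ), next^[j] v = next^[k] v → j = k)
    (hdisj : Pairwise (Disjoint on B)) (hmap : ∀ v, ∀ s ∈ B v, β s ∈ B (next v))
    (hinj : ∀ v, Set.InjOn β (B v)) (v : ι) :
    Set.InjOn (forestF B β).connectedComponentMk (B v) := by
  intro a ha b hb hab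
  obtain ⟨j, k, hjk⟩ := exists_iterate_eq_of_reachable (SimpleGraph.ConnectedComponent.eq.1 hab)
  have hja := mapsTo_iterate_bag hmap j v ha
  have hkb := mapsTo_iterate_bag hmap k v hb
  have hbags : next^[j] v = next^[k] v := by
    by_contra hne
    exact Set.disjoint_left.1 (hdisj hne) hja (hjk ▸ hkb)
  obtain rfl := hnext v j k hbags
  exact injOn_iterate_bag hmap hinj j v ha hb hjk

end Bags

/-- If the bag sizes are unbounded, then `F_β` has infinitely many connected components
meeting the union of the bags. -/
theorem forestF_infinitely_many_components (next : ι → ι)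
    (hnext : ∀ (v : ι) (j k : ℕ), next^[j] v = next^[k] v → j = k)
    (B : ι → Set S) (hdisj : Pairwise (Disjoint on B))
    (β : S → S) (hmap : ∀ v, ∀ s ∈ B v, β s ∈ B (next v))
    (hinj : ∀ v, Set.InjOn β (B v))
    (hunb : ∀ N : ℕ, ∃ v : ι, ∃ T : Finset S, ↑T ⊆ B v ∧ N ≤ T.card) :
    {c : (forestF B β).ConnectedComponent |
      ∃ s ∈ ⋃ v, B v, (forestF B β).connectedComponentMk s = c}.Infinite := by
  set C := {c : (forestF B β).ConnectedComponent |
    ∃ s ∈ ⋃ v, B v, (forestF B β).connectedComponentMk s = c}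
  intro hfin
  obtain ⟨v, T, hTB, hcard⟩ := hunb (C.ncard + 1)
  have hmaps : ∀ a ∈ (T : Set S), (forestF B β).connectedComponentMk a ∈ C :=
    fun a ha => ⟨a, Set.mem_iUnion.2 ⟨v, hTB ha⟩, rfl⟩
  have hle := Set.ncard_le_ncard_of_injOn _ hmaps
    ((connectedComponentMk_injOn_bag hnext hdisj hmap hinj v).mono hTB) hfin
  rw [Set.ncard_coe_finset] at hle
  omega
end

section
/- Let (R_i)_{i∈ℕ} be a sequence of rectangles in ℤ² such that for every even i the pair (R_i, R_{i+1}) is well-joined in a vertical-to-horizontal way and for every odd i the pair (R_i, R_{i+1}) is well-joined in a horizontal-to-vertical way, and suppose the side lengths of the R_i are unbounded (for every N there is an i such that some side of R_i has length at least N). Let ω be a bond configuration such that for every even i there is a vertical crossing of R_i using only ω-open edges with both endpoints in R_i, and for every odd i there is a horizontal crossing of R_i using only ω-open edges with both endpoints in R_i. Then the graph with vertex set ⋃_i R_i whose edges are the ω-open edges having both endpoints in a common R_i has an infinite connected component. -/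
/-- The lattice graph `ℤ²`: two vertices are adjacent iff their ℓ¹-distance is `1`. -/
def latticeGraph : SimpleGraph (ℤ × ℤ) where
  Adj x y := |x.1 - y.1| + |x.2 - y.2| = 1
  symm := by
    constructor
    intro x y h
    rw [abs_sub_comm, abs_sub_comm x.2] at h
    exact h
  loopless := by constructor; intro x h; simp at h

/-- A block: a finite nonempty set of consecutive integers. -/
def IsBlock (B : Set ℤ) : Prop := ∃ a b : ℤ, a ≤ b ∧ B = Set.Icc a b

/-- The subgraph of the open subgraph of `ω` induced on a set `R`: `ω`-open edges with
both endpoints in `R`. -/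
def restrictedOpen (ω : Set (Sym2 (ℤ × ℤ))) (R : Set (ℤ × ℤ)) : SimpleGraph (ℤ × ℤ) :=
  SimpleGraph.fromRel
    (fun x y => latticeGraph.Adj x y ∧ s(x, y) ∈ ω ∧ x ∈ R ∧ y ∈ R)

/-- A horizontal crossing of `R`: a path of `ω`-open edges inside `R` joining a vertex
of minimal first coordinate to a vertex of maximal first coordinate. -/
def HasCrossH (ω : Set (Sym2 (ℤ × ℤ))) (R : Set (ℤ × ℤ)) : Prop :=
  ∃ u v : ℤ × ℤ, u ∈ R ∧ v ∈ R ∧ (∀ w ∈ R, u.1 ≤ w.1) ∧ (∀ w ∈ R, w.1 ≤ v.1) ∧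
    (restrictedOpen ω R).Reachable u v

/-- A vertical crossing of `R`: a path of `ω`-open edges inside `R` joining a vertex
of minimal second coordinate to a vertex of maximal second coordinate. -/
def HasCrossV (ω : Set (Sym2 (ℤ × ℤ))) (R : Set (ℤ × ℤ)) : Prop :=
  ∃ u v : ℤ × ℤ, u ∈ R ∧ v ∈ R ∧ (∀ w ∈ R, u.2 ≤ w.2) ∧ (∀ w ∈ R, w.2 ≤ v.2) ∧
    (restrictedOpen ω R).Reachable u v

/-- The graph on `⋃ i, Rᵢ` whose edges are the `ω`-open edges having both endpoints in
a common `Rᵢ`. -/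
def roadGraph (ω : Set (Sym2 (ℤ × ℤ))) (R : ℕ → Set (ℤ × ℤ)) : SimpleGraph (ℤ × ℤ) :=
  SimpleGraph.fromRel
    (fun x y => latticeGraph.Adj x y ∧ s(x, y) ∈ ω ∧ ∃ i, x ∈ R i ∧ y ∈ R i)

/-! Consecutive crossings meet, because in `ℤ²` a horizontal and a vertical crossing of the
same box share a vertex. Hence all the crossings lie in one component of the road graph. Its
projections on the axes contain every `Aᵢ` and every `Bᵢ`, whose sizes are unbounded, so the
component is infinite.

That two such crossings `H` and `V` meet is a parity argument. For a point `z`, count modulo `2`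
the horizontal edges of `H` below `z` that cross the vertical line `x = z.1 + ½`. If `V` avoided
`H`, this count would be constant along `V`, as long as `V` stays in the columns `p.1 ≤ x < q.1`
for the endpoints `p`, `q` of `H` (which extending `H` by one step to the right ensures). But it
vanishes below `H` and is odd above `H`. -/

open SimpleGraph

lemma latticeGraph_adj_iff {u v : ℤ × ℤ} :
    latticeGraph.Adj u v ↔
      (u.1 = v.1 ∧ (u.2 = v.2 + 1 ∨ v.2 = u.2 + 1)) ∨
        (u.2 = v.2 ∧ (u.1 = v.1 + 1 ∨ v.1 = u.1 + 1)) := by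
  change |u.1 - v.1| + |u.2 - v.2| = 1 ↔ _
  rcases abs_cases (u.1 - v.1) with ⟨h₁, h₁'⟩ | ⟨h₁, h₁'⟩ <;>
    rcases abs_cases (u.2 - v.2) with ⟨h₂, h₂'⟩ | ⟨h₂, h₂'⟩ <;> rw [h₁, h₂] <;> omega

theorem SimpleGraph.Walk.sum_map_darts_sub {V α : Type*} [AddCommGroup α] {G : SimpleGraph V}
    {u v : V} (p : G.Walk u v) (φ : V → α) :
    (p.darts.map fun d => φ d.snd - φ d.fst).sum = φ v - φ u := by
  induction p with
  | nil => simp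
  | cons h p ih =>
    simp only [Walk.darts_cons, List.map_cons, List.sum_cons, ih]
    abel

theorem SimpleGraph.Walk.exists_mem_support_eq {V : Type*} {G : SimpleGraph V} (f : V → ℤ)
    (hf : ∀ x y, G.Adj x y → f y ≤ f x + 1) {u v : V} (p : G.Walk u v) {t : ℤ}
    (hu : f u ≤ t) (hv : t ≤ f v) : ∃ w ∈ p.support, f w = t := by
  induction p with
  | nil => exact ⟨_, Walk.start_mem_support _, le_antisymm hu hv⟩
  | cons h p ih =>
    rcases hu.eq_or_lt with hut | hut
    · exact ⟨_, Walk.start_mem_support _, hut⟩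
    · obtain ⟨w, hw, hfw⟩ := ih (by linarith [hf _ _ h]) hv
      exact ⟨w, List.mem_cons_of_mem _ hw, hfw⟩

/-- `1` iff `uv` is a horizontal edge crossing the downward ray from `(z.1 + ½, z.2)`. -/
def crossesRayBelow (z u v : ℤ × ℤ) : ZMod 2 :=
  if u.2 = v.2 ∧ u.2 < z.2 ∧ min u.1 v.1 = z.1 then 1 else 0

def rayParity {u v : ℤ × ℤ} (W : latticeGraph.Walk u v) (z : ℤ × ℤ) : ZMod 2 :=
  (W.darts.map fun d => crossesRayBelow z d.fst d.snd).sum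

section crossesRayBelow

variable {u v z : ℤ × ℤ}

lemma crossesRayBelow_up (hu : u ≠ z) (hv : v ≠ z) :
    crossesRayBelow (z.1, z.2 + 1) u v = crossesRayBelow z u v := by
  obtain ⟨ux, uy⟩ := u; obtain ⟨vx, vy⟩ := v; obtain ⟨zx, zy⟩ := z
  simp only [ne_eq, Prod.mk.injEq] at hu hv
  simp only [crossesRayBelow]
  split_ifs <;> first | rfl | omega

lemma crossesRayBelow_add_right (h : latticeGraph.Adj u v) (hu : u ≠ (z.1 + 1, z.2))
    (hv : v ≠ (z.1 + 1, z.2)) :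
    crossesRayBelow z u v + crossesRayBelow (z.1 + 1, z.2) u v =
      (if v.1 = z.1 + 1 ∧ v.2 < z.2 then 1 else 0) -
        (if u.1 = z.1 + 1 ∧ u.2 < z.2 then 1 else 0) := by
  obtain ⟨ux, uy⟩ := u; obtain ⟨vx, vy⟩ := v; obtain ⟨zx, zy⟩ := z
  rw [latticeGraph_adj_iff] at h
  simp only [ne_eq, Prod.mk.injEq] at hu hv h
  simp only [crossesRayBelow]
  split_ifs <;> first | decide | omega

lemma crossesRayBelow_eq_zero (hu : z.2 ≤ u.2) : crossesRayBelow z u v = 0 :=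
  if_neg fun h => by omega

lemma crossesRayBelow_eq_sub (h : latticeGraph.Adj u v) (hu : u ≠ z) (hv : v ≠ z)
    (hu₂ : u.2 ≤ z.2) (hv₂ : v.2 ≤ z.2) :
    crossesRayBelow z u v =
      (if v.1 ≤ z.1 then 1 else 0) - (if u.1 ≤ z.1 then 1 else 0) := by
  obtain ⟨ux, uy⟩ := u; obtain ⟨vx, vy⟩ := v; obtain ⟨zx, zy⟩ := z
  rw [latticeGraph_adj_iff] at h
  simp only [ne_eq, Prod.mk.injEq] at hu hv h hu₂ hv₂
  simp only [crossesRayBelow]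
  split_ifs <;> first | decide | omega

end crossesRayBelow

section rayParity

variable {u v : ℤ × ℤ} (W : latticeGraph.Walk u v)

lemma rayParity_up {z : ℤ × ℤ} (hz : z ∉ W.support) :
    rayParity W (z.1, z.2 + 1) = rayParity W z := by
  refine congrArg List.sum (List.map_congr_left fun d hd => crossesRayBelow_up
    (ne_of_mem_of_not_mem (W.dart_fst_mem_support_of_mem_darts hd) hz)
    (ne_of_mem_of_not_mem (W.dart_snd_mem_support_of_mem_darts hd) hz))

lemma rayParity_right {z : ℤ × ℤ} (hz : (z.1 + 1, z.2) ∉ W.support) (hu : u.1 ≠ z.1 + 1)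
    (hv : v.1 ≠ z.1 + 1) : rayParity W (z.1 + 1, z.2) = rayParity W z := by
  set g : ℤ × ℤ → ZMod 2 := fun w => if w.1 = z.1 + 1 ∧ w.2 < z.2 then 1 else 0
  have hsum : rayParity W z + rayParity W (z.1 + 1, z.2) = 0 :=
    calc _ = (W.darts.map fun d =>
          crossesRayBelow z d.fst d.snd + crossesRayBelow (z.1 + 1, z.2) d.fst d.snd).sum :=
          List.sum_map_add.symm
      _ = (W.darts.map fun d => g d.snd - g d.fst).sum := by
          refine congrArg List.sum (List.map_congr_left fun d hd => ?_)
          exact crossesRayBelow_add_right d.adj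
            (ne_of_mem_of_not_mem (W.dart_fst_mem_support_of_mem_darts hd) hz)
            (ne_of_mem_of_not_mem (W.dart_snd_mem_support_of_mem_darts hd) hz)
      _ = g v - g u := W.sum_map_darts_sub g
      _ = 0 := by simp [g, hu, hv]
  exact (CharTwo.add_eq_zero.1 hsum).symm

lemma rayParity_eq_zero {z : ℤ × ℤ} (h : ∀ w ∈ W.support, z.2 ≤ w.2) : rayParity W z = 0 :=
  List.sum_eq_zero fun x hx => by
    obtain ⟨d, hd, rfl⟩ := List.mem_map.1 hx
    exact crossesRayBelow_eq_zero (h _ (W.dart_fst_mem_support_of_mem_darts hd))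

lemma rayParity_eq_one {z : ℤ × ℤ} (hz : z ∉ W.support) (h : ∀ w ∈ W.support, w.2 ≤ z.2)
    (hu : u.1 ≤ z.1) (hv : z.1 < v.1) : rayParity W z = 1 := by
  set c : ℤ × ℤ → ZMod 2 := fun w => if w.1 ≤ z.1 then 1 else 0
  calc rayParity W z = (W.darts.map fun d => c d.snd - c d.fst).sum := by
        refine congrArg List.sum (List.map_congr_left fun d hd => ?_)
        have hfst := W.dart_fst_mem_support_of_mem_darts hd
        have hsnd := W.dart_snd_mem_support_of_mem_darts hd
        exact crossesRayBelow_eq_sub d.adj (ne_of_mem_of_not_mem hfst hz)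
          (ne_of_mem_of_not_mem hsnd hz) (h _ hfst) (h _ hsnd)
    _ = c v - c u := W.sum_map_darts_sub c
    _ = 1 := by simp [c, hu, not_le.2 hv]

lemma rayParity_eq_of_adj {z z' : ℤ × ℤ} (h : latticeGraph.Adj z z') (hz : z ∉ W.support)
    (hz' : z' ∉ W.support) (hu : u.1 ≤ z.1 ∧ u.1 ≤ z'.1) (hv : z.1 < v.1 ∧ z'.1 < v.1) :
    rayParity W z = rayParity W z' := by
  obtain ⟨x, y⟩ := z; obtain ⟨x', y'⟩ := z'
  rw [latticeGraph_adj_iff] at h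
  simp only at h hu hv
  rcases h with ⟨rfl, rfl | rfl⟩ | ⟨rfl, rfl | rfl⟩
  · exact rayParity_up W hz'
  · exact (rayParity_up W hz).symm
  · exact rayParity_right W (z := (x', y)) hz (by omega) (by omega)
  · exact (rayParity_right W (z := (x, y)) hz' (by omega) (by omega)).symm

lemma rayParity_eq_of_walk {r s : ℤ × ℤ} (V : latticeGraph.Walk r s)
    (hV : ∀ w ∈ V.support, w ∉ W.support ∧ u.1 ≤ w.1 ∧ w.1 < v.1) :
    rayParity W r = rayParity W s := by
  induction V with
  | nil => rfl
  | cons h V ih =>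
    simp only [Walk.support_cons, List.mem_cons, forall_eq_or_imp] at hV
    have hnext := hV.2 _ V.start_mem_support
    exact (rayParity_eq_of_adj W h hV.1.1 hnext.1 ⟨hV.1.2.1, hnext.2.1⟩
      ⟨hV.1.2.2, hnext.2.2⟩).trans (ih hV.2)

end rayParity

theorem exists_mem_support_of_crossing {p q r s : ℤ × ℤ} (H : latticeGraph.Walk p q)
    (V : latticeGraph.Walk r s) {a₁ a₂ b₁ b₂ : ℤ}
    (hH : ∀ w ∈ H.support, b₁ ≤ w.2 ∧ w.2 ≤ b₂) (hp : p.1 ≤ a₁) (hq : a₂ ≤ q.1)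
    (hV : ∀ w ∈ V.support, a₁ ≤ w.1 ∧ w.1 ≤ a₂) (hr : r.2 ≤ b₁) (hs : b₂ ≤ s.2) :
    ∃ w ∈ H.support, w ∈ V.support := by
  by_contra! hdisj
  have hstep : latticeGraph.Adj q (q.1 + 1, q.2) :=
    latticeGraph_adj_iff.2 (Or.inr ⟨rfl, Or.inr rfl⟩)
  set H' := H.concat hstep
  have hH' : ∀ w ∈ H'.support, b₁ ≤ w.2 ∧ w.2 ≤ b₂ := by
    simp only [H', Walk.support_concat, List.mem_append, List.mem_singleton]
    rintro w (hw | rfl)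
    exacts [hH w hw, hH q H.end_mem_support]
  have hVH' : ∀ w ∈ V.support, w ∉ H'.support ∧ p.1 ≤ w.1 ∧ w.1 < q.1 + 1 := by
    intro w hw
    simp only [H', Walk.support_concat, List.mem_append, List.mem_singleton, not_or]
    have := hV w hw
    exact ⟨⟨fun hwH => hdisj w hwH hw, by rintro rfl; simp at this; omega⟩, by omega, by omega⟩
  have hbot : rayParity H' r = 0 := rayParity_eq_zero H' fun w hw => hr.trans (hH' w hw).1
  have htop : rayParity H' s = 1 :=
    rayParity_eq_one H' (hVH' s V.end_mem_support).1 (fun w hw => (hH' w hw).2.trans hs)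
      (hVH' s V.end_mem_support).2.1 (hVH' s V.end_mem_support).2.2
  exact zero_ne_one (hbot.symm.trans ((rayParity_eq_of_walk H' V hVH').trans htop))

lemma IsBlock.nonempty {B : Set ℤ} (h : IsBlock B) : B.Nonempty := by
  obtain ⟨a, b, hab, rfl⟩ := h
  exact Set.nonempty_Icc.2 hab

lemma restrictedOpen_adj {ω : Set (Sym2 (ℤ × ℤ))} {R : Set (ℤ × ℤ)} {x y : ℤ × ℤ}
    (h : (restrictedOpen ω R).Adj x y) : latticeGraph.Adj x y ∧ x ∈ R ∧ y ∈ R := by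
  obtain ⟨-, ⟨hxy, -, hx, hy⟩ | ⟨hyx, -, hy, hx⟩⟩ := h
  exacts [⟨hxy, hx, hy⟩, ⟨hyx.symm, hx, hy⟩]

lemma restrictedOpen_le_latticeGraph (ω : Set (Sym2 (ℤ × ℤ))) (R : Set (ℤ × ℤ)) :
    restrictedOpen ω R ≤ latticeGraph := fun _ _ h => (restrictedOpen_adj h).1

lemma restrictedOpen_le_roadGraph (ω : Set (Sym2 (ℤ × ℤ))) (R : ℕ → Set (ℤ × ℤ)) (i : ℕ) :
    restrictedOpen ω (R i) ≤ roadGraph ω R := by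
  rintro x y ⟨hne, ⟨hxy, hω, hx, hy⟩ | ⟨hyx, hω, hy, hx⟩⟩
  exacts [⟨hne, .inl ⟨hxy, hω, i, hx, hy⟩⟩, ⟨hne, .inr ⟨hyx, hω, i, hy, hx⟩⟩]

lemma mem_of_mem_support_restrictedOpen {ω : Set (Sym2 (ℤ × ℤ))} {R : Set (ℤ × ℤ)}
    {u v : ℤ × ℤ} (W : (restrictedOpen ω R).Walk u v) (hu : u ∈ R) :
    ∀ w ∈ W.support, w ∈ R := by
  induction W with
  | nil => simpa using hu
  | cons h W ih =>
    simp only [Walk.support_cons, List.mem_cons, forall_eq_or_imp]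
    exact ⟨hu, ih (restrictedOpen_adj h).2.2⟩

lemma roadGraph_reachable_of_restrictedOpen {ω : Set (Sym2 (ℤ × ℤ))} {R : ℕ → Set (ℤ × ℤ)}
    {i j : ℕ} {x y w : ℤ × ℤ} (hx : (restrictedOpen ω (R i)).Reachable x w)
    (hy : (restrictedOpen ω (R j)).Reachable y w) : (roadGraph ω R).Reachable x y :=
  (hx.mono (restrictedOpen_le_roadGraph ω R i)).trans
    (hy.mono (restrictedOpen_le_roadGraph ω R j)).symm

/-- `HasCrossH ω R` and `HasCrossV ω R` unfold to `∃ u v, IsCrossing ω R Prod.fst u v` and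
`∃ u v, IsCrossing ω R Prod.snd u v`. -/
def IsCrossing (ω : Set (Sym2 (ℤ × ℤ))) (R : Set (ℤ × ℤ)) (f : ℤ × ℤ → ℤ) (u v : ℤ × ℤ) :
    Prop :=
  u ∈ R ∧ v ∈ R ∧ (∀ w ∈ R, f u ≤ f w) ∧ (∀ w ∈ R, f w ≤ f v) ∧
    (restrictedOpen ω R).Reachable u v

namespace IsCrossing

variable {ω : Set (Sym2 (ℤ × ℤ))}

lemma image_subset_image_reachable {R : ℕ → Set (ℤ × ℤ)} {i : ℕ} {f : ℤ × ℤ → ℤ}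
    {u v x : ℤ × ℤ} (h : IsCrossing ω (R i) f u v)
    (hf : ∀ x y, latticeGraph.Adj x y → f y ≤ f x + 1) (hx : (roadGraph ω R).Reachable u x) :
    f '' R i ⊆ f '' {y | (roadGraph ω R).Reachable y x} := by
  rintro _ ⟨y, hy, rfl⟩
  obtain ⟨-, -, hmin, hmax, ⟨W⟩⟩ := h
  obtain ⟨w, hw, hfw⟩ := W.exists_mem_support_eq f
    (fun x y hxy => hf x y (restrictedOpen_le_latticeGraph ω (R i) hxy)) (hmin y hy) (hmax y hy)
  exact ⟨w, (Reachable.mono (restrictedOpen_le_roadGraph ω R i)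
    ⟨W.takeUntil w hw⟩).symm.trans hx, hfw⟩

/-- Both crossings cross the box `A' × B'`. -/
lemma exists_reachable_reachable {ω' : Set (Sym2 (ℤ × ℤ))} {A A' B B' : Set ℤ}
    {p q r s : ℤ × ℤ} (hH : IsCrossing ω (A ×ˢ B') Prod.fst p q)
    (hV : IsCrossing ω' (A' ×ˢ B) Prod.snd r s) (hA' : IsBlock A') (hB' : IsBlock B')
    (hA : A' ⊆ A) (hB : B' ⊆ B) :
    ∃ w, (restrictedOpen ω (A ×ˢ B')).Reachable p w ∧
      (restrictedOpen ω' (A' ×ˢ B)).Reachable r w := by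
  obtain ⟨a₁, a₂, ha, rfl⟩ := hA'
  obtain ⟨b₁, b₂, hb, rfl⟩ := hB'
  obtain ⟨hp, -, hpmin, hqmax, ⟨WH⟩⟩ := hH
  obtain ⟨hr, -, hrmin, hsmax, ⟨WV⟩⟩ := hV
  have hbox : ∀ x ∈ Set.Icc a₁ a₂, ∀ y ∈ Set.Icc b₁ b₂,
      (x, y) ∈ A ×ˢ Set.Icc b₁ b₂ ∧ (x, y) ∈ Set.Icc a₁ a₂ ×ˢ B :=
    fun x hx y hy => ⟨⟨hA hx, hy⟩, ⟨hx, hB hy⟩⟩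
  have hlo := hbox a₁ ⟨le_rfl, ha⟩ b₁ ⟨le_rfl, hb⟩
  obtain ⟨w, hwH, hwV⟩ := exists_mem_support_of_crossing
    (WH.mapLe (restrictedOpen_le_latticeGraph _ _)) (WV.mapLe (restrictedOpen_le_latticeGraph _ _))
    (a₁ := a₁) (a₂ := a₂) (b₁ := b₁) (b₂ := b₂)
    (by simpa only [Walk.support_mapLe_eq_support, Set.mem_Icc] using
      fun w hw => (mem_of_mem_support_restrictedOpen WH hp w hw).2)
    (hpmin _ hlo.1) (hqmax _ (hbox a₂ ⟨ha, le_rfl⟩ b₁ ⟨le_rfl, hb⟩).1)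
    (by simpa only [Walk.support_mapLe_eq_support, Set.mem_Icc] using
      fun w hw => (mem_of_mem_support_restrictedOpen WV hr w hw).1)
    (hrmin _ hlo.2) (hsmax _ (hbox a₁ ⟨le_rfl, ha⟩ b₂ ⟨hb, le_rfl⟩).2)
  rw [Walk.support_mapLe_eq_support] at hwH hwV
  exact ⟨w, ⟨WH.takeUntil w hwH⟩, ⟨WV.takeUntil w hwV⟩⟩

end IsCrossing

theorem Set.infinite_of_projections_unbounded {α β ι : Type*} {S : Set (α × β)}
    {A : ι → Set α} {B : ι → Set β} (hunb : ∀ N : ℕ, ∃ i, N ≤ (A i).ncard ∨ N ≤ (B i).ncard)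
    (hA : ∀ i, A i ⊆ Prod.fst '' S) (hB : ∀ i, B i ⊆ Prod.snd '' S) : S.Infinite := by
  intro hS
  obtain ⟨i, hi | hi⟩ := hunb ((Prod.fst '' S).ncard + (Prod.snd '' S).ncard + 1)
  · have := Set.ncard_le_ncard (hA i) (hS.image _); omega
  · have := Set.ncard_le_ncard (hB i) (hS.image _); omega

def AlternatingCrossings (ω : Set (Sym2 (ℤ × ℤ))) (R : ℕ → Set (ℤ × ℤ)) (u v : ℕ → ℤ × ℤ) :
    Prop :=
  ∀ i, (Even i → IsCrossing ω (R i) Prod.snd (u i) (v i)) ∧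
    (Odd i → IsCrossing ω (R i) Prod.fst (u i) (v i))

lemma exists_alternatingCrossings {ω : Set (Sym2 (ℤ × ℤ))} {R : ℕ → Set (ℤ × ℤ)}
    (hE : ∀ i, Even i → HasCrossV ω (R i)) (hO : ∀ i, Odd i → HasCrossH ω (R i)) :
    ∃ u v, AlternatingCrossings ω R u v := by
  have h : ∀ i, ∃ u v, (Even i → IsCrossing ω (R i) Prod.snd u v) ∧
      (Odd i → IsCrossing ω (R i) Prod.fst u v) := by
    intro i
    rcases Nat.even_or_odd i with hi | hi
    · obtain ⟨u, v, h⟩ := hE i hi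
      exact ⟨u, v, fun _ => h, fun ho => absurd hi (Nat.not_even_iff_odd.2 ho)⟩
    · obtain ⟨u, v, h⟩ := hO i hi
      exact ⟨u, v, fun he => absurd he (Nat.not_even_iff_odd.2 hi), fun _ => h⟩
  choose u v h using h
  exact ⟨u, v, h⟩

lemma AlternatingCrossings.reachable_zero {A B : ℕ → Set ℤ} {ω : Set (Sym2 (ℤ × ℤ))}
    {u v : ℕ → ℤ × ℤ} (h : AlternatingCrossings ω (fun i => A i ×ˢ B i) u v)
    (hA : ∀ i, IsBlock (A i)) (hB : ∀ i, IsBlock (B i))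
    (hjoinE : ∀ i, Even i → A i ⊆ A (i + 1) ∧ B (i + 1) ⊆ B i)
    (hjoinO : ∀ i, Odd i → B i ⊆ B (i + 1) ∧ A (i + 1) ⊆ A i) (i : ℕ) :
    (roadGraph ω fun i => A i ×ˢ B i).Reachable (u i) (u 0) := by
  induction i with
  | zero => rfl
  | succ i ih =>
    refine Reachable.trans ?_ ih
    rcases Nat.even_or_odd i with hi | hi
    · obtain ⟨w, h₁, h₀⟩ := ((h (i + 1)).2 hi.add_one).exists_reachable_reachable
        ((h i).1 hi) (hA i) (hB (i + 1)) (hjoinE i hi).1 (hjoinE i hi).2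
      exact roadGraph_reachable_of_restrictedOpen h₁ h₀
    · obtain ⟨w, h₀, h₁⟩ := ((h i).2 hi).exists_reachable_reachable
        ((h (i + 1)).1 hi.add_one) (hA (i + 1)) (hB i) (hjoinO i hi).2 (hjoinO i hi).1
      exact roadGraph_reachable_of_restrictedOpen h₁ h₀

/-- If `(Rᵢ)` is a sequence of rectangles, alternately well-joined in a
vertical-to-horizontal and in a horizontal-to-vertical way, with unbounded side lengths,
and `ω` is a configuration crossing each even-indexed rectangle vertically and each
odd-indexed rectangle horizontally, then the graph of `ω`-open edges lying in a common
rectangle has an infinite connected component. -/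
theorem road_has_infinite_component (A B : ℕ → Set ℤ)
    (hA : ∀ i, IsBlock (A i)) (hB : ∀ i, IsBlock (B i))
    (hjoinE : ∀ i, Even i → A i ⊂ A (i + 1) ∧ B (i + 1) ⊂ B i)
    (hjoinO : ∀ i, Odd i → B i ⊂ B (i + 1) ∧ A (i + 1) ⊂ A i)
    (hunb : ∀ N : ℕ, ∃ i, N ≤ (A i).ncard ∨ N ≤ (B i).ncard)
    (ω : Set (Sym2 (ℤ × ℤ)))
    (hcrossE : ∀ i, Even i → HasCrossV ω (A i ×ˢ B i))
    (hcrossO : ∀ i, Odd i → HasCrossH ω (A i ×ˢ B i)) :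
    ∃ x ∈ ⋃ i, A i ×ˢ B i,
      {y | (roadGraph ω (fun i => A i ×ˢ B i)).Reachable y x}.Infinite := by
  set G := roadGraph ω fun i => A i ×ˢ B i
  obtain ⟨u, v, hcr⟩ := exists_alternatingCrossings hcrossE hcrossO
  have hreach : ∀ i, G.Reachable (u i) (u 0) := hcr.reachable_zero hA hB
    (fun i hi => ⟨(hjoinE i hi).1.subset, (hjoinE i hi).2.subset⟩)
    (fun i hi => ⟨(hjoinO i hi).1.subset, (hjoinO i hi).2.subset⟩)
  have hfst i (hi : Odd i) : A i ⊆ Prod.fst '' {y | G.Reachable y (u 0)} := by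
    simpa only [Set.fst_image_prod _ (hB i).nonempty] using
      ((hcr i).2 hi).image_subset_image_reachable
        (by intro x y h; rw [latticeGraph_adj_iff] at h; omega) (hreach i)
  have hsnd i (hi : Even i) : B i ⊆ Prod.snd '' {y | G.Reachable y (u 0)} := by
    simpa only [Set.snd_image_prod (hA i).nonempty] using
      ((hcr i).1 hi).image_subset_image_reachable
        (by intro x y h; rw [latticeGraph_adj_iff] at h; omega) (hreach i)
  refine ⟨u 0, Set.mem_iUnion.2 ⟨0, ((hcr 0).1 ⟨0, rfl⟩).1⟩,
    Set.infinite_of_projections_unbounded hunb (fun i => ?_) (fun i => ?_)⟩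
  · rcases Nat.even_or_odd i with hi | hi
    exacts [(hjoinE i hi).1.subset.trans (hfst _ hi.add_one), hfst i hi]
  · rcases Nat.even_or_odd i with hi | hi
    exacts [hsnd i hi, (hjoinO i hi).1.subset.trans (hsnd _ hi.add_one)]
end
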